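/- arXiv:1501.02250 — 2 statements merged into one kernel-verified Lean document; each statement's English description precedes it below -/
import Mathlib

section
/- For a nontrivial linearly ordered FL_ew-algebra A: if the term (¬x → x) ∧ ¬(x³) is not satisfiable in A (no element a satisfies ¬a ≤ a and a³ = 0 simultaneously with value 1), then negation in A has no fixed point and the set {x ∈ A : x² > 0} is closed under multiplication. -/
class FLew (α : Type*) extends Lattice α, CommMonoid α, Zero α where
  flew_zero_le : ∀ x : α, 0 ≤ x
  flew_le_one : ∀ x : α, x ≤ 1
  arr : α → α → α
  resid : ∀ x y z : α, x * y ≤ z ↔ x ≤ arr y z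

def FLew.neg {α : Type*} [FLew α] (x : α) : α := FLew.arr x 0

inductive Term where
  | var : ℕ → Term
  | zero : Term
  | one : Term
  | mul : Term → Term → Term
  | arr : Term → Term → Term
  | inf : Term → Term → Term
  | sup : Term → Term → Term

def Term.eval {α : Type*} [FLew α] (e : ℕ → α) : Term → α
  | .var n => e n
  | .zero => 0
  | .one => 1
  | .mul a b => a.eval e * b.eval e
  | .arr a b => FLew.arr (a.eval e) (b.eval e)
  | .inf a b => a.eval e ⊓ b.eval e
  | .sup a b => a.eval e ⊔ b.eval e

def Term.evalB (e : ℕ → Bool) : Term → Bool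
  | .var n => e n
  | .zero => false
  | .one => true
  | .mul a b => a.evalB e && b.evalB e
  | .arr a b => !a.evalB e || b.evalB e
  | .inf a b => a.evalB e && b.evalB e
  | .sup a b => a.evalB e || b.evalB e

/-- Satisfiability in the two-element Boolean algebra. -/
def BoolSat (t : Term) : Prop := ∃ e : ℕ → Bool, t.evalB e = true

section Aux

variable {α : Type*} [FLew α]

lemma flew_mul_le_mul_right {a b : α} (h : a ≤ b) (c : α) : a * c ≤ b * c := by
  have h1 : b ≤ FLew.arr c (b * c) := (FLew.resid b c (b * c)).mp le_rfl
  exact (FLew.resid a c (b * c)).mpr (le_trans h h1)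

lemma flew_mul_le_mul_left {a b : α} (h : a ≤ b) (c : α) : c * a ≤ c * b := by
  rw [mul_comm c a, mul_comm c b]; exact flew_mul_le_mul_right h c

lemma flew_mul_le_left (a b : α) : a * b ≤ a := by
  have := flew_mul_le_mul_left (FLew.flew_le_one b) a
  rwa [mul_one] at this

lemma flew_eq_zero {a : α} (h : a ≤ 0) : a = 0 :=
  le_antisymm h (FLew.flew_zero_le a)

lemma flew_neg_mul (a : α) : FLew.neg a * a ≤ 0 :=
  (FLew.resid (FLew.neg a) a 0).mpr le_rfl

lemma flew_arr_eq_one {a b : α} (h : a ≤ b) : FLew.arr a b = 1 := by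
  refine le_antisymm (FLew.flew_le_one _) ?_
  exact (FLew.resid 1 a b).mp (by rwa [one_mul])

lemma flew_le_of_arr_eq_one {a b : α} (h : FLew.arr a b = 1) : a ≤ b := by
  have : (1 : α) * a ≤ b := (FLew.resid 1 a b).mpr (le_of_eq h.symm)
  rwa [one_mul] at this

variable (hlin : ∀ a b : α, a ≤ b ∨ b ≤ a)
  (h : ¬ ∃ a : α, FLew.arr (FLew.neg a) a ⊓ FLew.neg (a * a * a) = 1)

include hlin h

lemma flew_cube (a : α) (h3 : a * a * a = 0) : ¬ FLew.neg a ≤ a := by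
  intro hle
  apply h
  refine ⟨a, ?_⟩
  have e1 : FLew.arr (FLew.neg a) a = 1 := flew_arr_eq_one hle
  have e2 : FLew.neg (a * a * a) = 1 := by
    rw [h3]; exact flew_arr_eq_one le_rfl
  rw [e1, e2, inf_idem]

lemma flew_sq (a : α) (h3 : a * a * a = 0) : a * a = 0 := by
  have hne := flew_cube hlin h a h3
  have hle : a ≤ FLew.neg a := (hlin (FLew.neg a) a).resolve_left hne
  have : a * a ≤ 0 := (FLew.resid a a 0).mpr hle
  exact flew_eq_zero this

lemma flew_four (x : α) (h3 : x * x * x ≠ 0) : (x * x * x) * x ≠ 0 := by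
  intro h4
  set z := FLew.neg (x * x) with hz
  have hzx2 : z * (x * x) ≤ 0 := flew_neg_mul (x * x)
  have hx2z : x * x ≤ z := by
    apply (FLew.resid (x * x) (x * x) 0).mp
    calc (x * x) * (x * x) = (x * x * x) * x := (mul_assoc (x*x) x x).symm
    _ = 0 := h4
    _ ≤ 0 := le_rfl
  have hzx : z ≤ x := by
    rcases hlin x z with hxz | hzx
    · exfalso; apply h3
      apply flew_eq_zero
      calc x * x * x ≤ x * x * z := flew_mul_le_mul_left hxz (x * x)
        _ = z * (x * x) := by rw [mul_comm]
        _ ≤ 0 := hzx2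
    · exact hzx
  have hz3 : z * z * z = 0 := by
    apply flew_eq_zero
    calc z * z * z ≤ x * z * z := flew_mul_le_mul_right (flew_mul_le_mul_right hzx z) z
      _ ≤ x * x * z := flew_mul_le_mul_right (flew_mul_le_mul_left hzx x) z
      _ = z * (x * x) := by rw [mul_comm]
      _ ≤ 0 := hzx2
  apply flew_cube hlin h z hz3
  -- show neg z ≤ z
  have h1 : FLew.neg z * (x * x) ≤ 0 :=
    le_trans (flew_mul_le_mul_left hx2z (FLew.neg z)) (flew_neg_mul z)
  exact (FLew.resid (FLew.neg z) (x * x) 0).mp h1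

lemma flew_key (a b : α) (hab : a ≤ b) (ha2 : a * a ≠ 0) :
    (a * b) * (a * b) ≠ 0 := by
  intro hab2
  set c := FLew.neg (a * b) with hc
  have hcm : c * (a * b) ≤ 0 := flew_neg_mul (a * b)
  have habc : a * b ≤ c :=
    (FLew.resid (a * b) (a * b) 0).mp (le_of_eq hab2)
  rcases hlin a c with hac | hca
  · -- a ≤ c : a³ = 0
    apply ha2
    apply flew_sq hlin h
    apply flew_eq_zero
    calc a * a * a ≤ a * a * b := flew_mul_le_mul_left hab (a * a)
      _ = a * (a * b) := by rw [mul_assoc]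
      _ ≤ c * (a * b) := flew_mul_le_mul_right hac (a * b)
      _ ≤ 0 := hcm
  · -- c ≤ a
    have hbc : b * c ≤ FLew.neg a := by
      apply (FLew.resid (b * c) a 0).mp
      calc (b * c) * a = c * (a * b) := by rw [mul_comm b c, mul_assoc, mul_comm b a]
        _ ≤ 0 := hcm
    have hkey : a * a * a ≤ FLew.neg a := by
      calc a * a * a ≤ a * a * b := flew_mul_le_mul_left hab (a * a)
        _ = a * (a * b) := by rw [mul_assoc]
        _ ≤ a * c := flew_mul_le_mul_left habc a
        _ ≤ b * c := flew_mul_le_mul_right hab c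
        _ ≤ FLew.neg a := hbc
    have h3 : a * a * a ≠ 0 := fun hh => ha2 (flew_sq hlin h a hh)
    apply flew_four hlin h a h3
    apply flew_eq_zero
    calc (a * a * a) * a ≤ FLew.neg a * a := flew_mul_le_mul_right hkey a
      _ ≤ 0 := flew_neg_mul a

end Aux

theorem stmt_12 {α : Type*} [FLew α] (hnt : (0 : α) ≠ 1)
    (hlin : ∀ a b : α, a ≤ b ∨ b ≤ a)
    (h : ¬ ∃ a : α, FLew.arr (FLew.neg a) a ⊓ FLew.neg (a * a * a) = 1) :
    (∀ a : α, FLew.neg a ≠ a) ∧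
    (∀ a b : α, 0 < a * a → 0 < b * b → 0 < (a * b) * (a * b)) := by
  constructor
  · intro a hfix
    have h2 : a * a = 0 := by
      apply flew_eq_zero
      exact (FLew.resid a a 0).mpr (le_of_eq hfix.symm)
    have h3 : a * a * a = 0 := by
      apply flew_eq_zero
      rw [h2]
      exact flew_mul_le_left 0 a
    exact flew_cube hlin h a h3 (le_of_eq hfix)
  · intro a b ha hb
    have ha2 : a * a ≠ 0 := fun hh => absurd (hh ▸ ha) (lt_irrefl 0)
    have hb2 : b * b ≠ 0 := fun hh => absurd (hh ▸ hb) (lt_irrefl 0)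
    have hne : (a * b) * (a * b) ≠ 0 := by
      rcases hlin a b with hab | hba
      · exact flew_key hlin h a b hab ha2
      · have := flew_key hlin h b a hba hb2
        rwa [mul_comm b a] at this
    exact (FLew.flew_zero_le _).lt_of_ne (Ne.symm hne)
end

section
/- Let A be a nontrivial FL_ew-algebra. A term built from literals using only · and ∨ is positively satisfiable in A if and only if it is satisfiable in the two-element Boolean algebra; the same holds for full satisfiability. -/
/-- `(·,∨)`-terms: built from literals using only `·` and `∨`. -/
inductive PV : Term → Prop
  | var (n : ℕ) : PV (.var n)
  | nvar (n : ℕ) : PV (.arr (.var n) .zero)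
  | mul {a b : Term} : PV a → PV b → PV (.mul a b)
  | sup {a b : Term} : PV a → PV b → PV (.sup a b)
section Helpers
variable {α : Type*} [FLew α]

lemma flew_zle (x : α) : 0 ≤ x := FLew.flew_zero_le x
lemma flew_le1 (x : α) : x ≤ 1 := FLew.flew_le_one x

lemma flew_mul_le_mul {a b c d : α} (h1 : a ≤ b) (h2 : c ≤ d) : a * c ≤ b * d := by
  have h3 : ∀ x y z : α, x ≤ y → x * z ≤ y * z := by
    intro x y z h
    exact (FLew.resid x z (y*z)).2 (le_trans h ((FLew.resid y z (y*z)).1 le_rfl))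
  calc a * c ≤ b * c := h3 _ _ _ h1
    _ = c * b := mul_comm _ _
    _ ≤ d * b := h3 _ _ _ h2
    _ = b * d := mul_comm _ _

lemma flew_le_zero {x : α} (h : x ≤ 0) : x = 0 := le_antisymm h (flew_zle x)

@[simp] lemma flew_mul_zero (x : α) : x * 0 = 0 := by
  apply flew_le_zero
  calc x * 0 ≤ 1 * 0 := flew_mul_le_mul (flew_le1 x) le_rfl
    _ = 0 := one_mul 0

@[simp] lemma flew_zero_mul (x : α) : 0 * x = 0 := by rw [mul_comm]; exact flew_mul_zero x

@[simp] lemma flew_sup_zero (x : α) : x ⊔ 0 = x := sup_eq_left.2 (flew_zle x)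
@[simp] lemma flew_zero_sup (x : α) : 0 ⊔ x = x := sup_eq_right.2 (flew_zle x)

lemma flew_mul_neg_self (x : α) : x * FLew.neg x = 0 := by
  apply flew_le_zero
  rw [mul_comm]
  exact (FLew.resid (FLew.neg x) x 0).2 le_rfl

@[simp] lemma flew_arr_zero_left (y : α) : FLew.arr 0 y = 1 := by
  refine le_antisymm (flew_le1 _) ?_
  refine (FLew.resid 1 0 y).1 ?_
  rw [one_mul]; exact flew_zle y

@[simp] lemma flew_arr_one_zero : FLew.arr (1:α) 0 = 0 := by
  apply flew_le_zero
  have := (FLew.resid (FLew.arr (1:α) 0) 1 0).2 le_rfl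
  rwa [mul_one] at this

@[simp] lemma flew_arr_one (x : α) : FLew.arr x (1:α) = 1 :=
  le_antisymm (flew_le1 _) ((FLew.resid 1 x 1).1 (flew_le1 _))

lemma flew_mul_sup (x a b : α) : x * (a ⊔ b) = x * a ⊔ x * b := by
  apply le_antisymm
  · rw [mul_comm]
    refine (FLew.resid _ _ _).2 (sup_le ?_ ?_)
    · exact (FLew.resid _ _ _).1 (by rw [mul_comm]; exact le_sup_left)
    · exact (FLew.resid _ _ _).1 (by rw [mul_comm]; exact le_sup_right)
  · exact sup_le (flew_mul_le_mul le_rfl le_sup_left) (flew_mul_le_mul le_rfl le_sup_right)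

lemma flew_sup_mul (a b y : α) : (a ⊔ b) * y = a * y ⊔ b * y := by
  rw [mul_comm, flew_mul_sup, mul_comm y a, mul_comm y b]

/-- finite suprema of a list -/
def lsup : List α → α
  | [] => 0
  | a :: t => a ⊔ lsup t

@[simp] lemma lsup_nil : lsup ([] : List α) = 0 := rfl
@[simp] lemma lsup_cons (a : α) (t : List α) : lsup (a :: t) = a ⊔ lsup t := rfl

lemma lsup_append (l₁ l₂ : List α) : lsup (l₁ ++ l₂) = lsup l₁ ⊔ lsup l₂ := by
  induction l₁ with
  | nil => simp
  | cons a t ih => simp [ih, sup_assoc]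

lemma mul_lsup (x : α) (l : List α) : x * lsup l = lsup (l.map (x * ·)) := by
  induction l with
  | nil => simp
  | cons a t ih => simp [flew_mul_sup, ih]

lemma lsup_eq_zero_iff (l : List α) : lsup l = 0 ↔ ∀ x ∈ l, x = 0 := by
  induction l with
  | nil => simp
  | cons a t ih =>
    simp only [lsup_cons, List.mem_cons]
    constructor
    · intro h
      have ha : a = 0 := flew_le_zero (le_trans le_sup_left h.le)
      have ht : lsup t = 0 := flew_le_zero (le_trans le_sup_right h.le)
      rintro x (rfl | hx)
      · exact ha
      · exact ih.1 ht x hx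
    · intro h
      rw [h a (Or.inl rfl), flew_zero_sup]
      exact ih.2 fun x hx => h x (Or.inr hx)

lemma flew_prod_le_one (l : List α) : l.prod ≤ 1 := by
  induction l with
  | nil => simp
  | cons a t ih =>
    rw [List.prod_cons]
    calc a * t.prod ≤ 1 * 1 := flew_mul_le_mul (flew_le1 a) ih
      _ = 1 := one_mul 1

lemma flew_prod_le_of_mem (f : ℕ → α) {l : List ℕ} {n : ℕ} (h : n ∈ l) :
    (l.map f).prod ≤ f n := by
  induction l with
  | nil => simp at h
  | cons a t ih =>
    rw [List.map_cons, List.prod_cons]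
    rcases List.mem_cons.1 h with rfl | hn
    · calc f n * (t.map f).prod ≤ f n * 1 := flew_mul_le_mul le_rfl (flew_prod_le_one _)
        _ = f n := mul_one _
    · calc f a * (t.map f).prod ≤ 1 * f n := flew_mul_le_mul (flew_le1 _) (ih hn)
        _ = f n := one_mul _

end Helpers

/-- monomials of a `(·,∨)`-term: positive and negative variable lists -/
def mons : Term → List (List ℕ × List ℕ)
  | .var n => [([n], [])]
  | .arr (.var n) .zero => [([], [n])]
  | .mul a b => (mons a).flatMap fun p => (mons b).map fun q => (p.1 ++ q.1, p.2 ++ q.2)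
  | .sup a b => mons a ++ mons b
  | _ => []

def mEval {α : Type*} [FLew α] (e : ℕ → α) (m : List ℕ × List ℕ) : α :=
  (m.1.map e).prod * (m.2.map (fun n => FLew.neg (e n))).prod

def mEvalB (b : ℕ → Bool) (m : List ℕ × List ℕ) : Bool :=
  (m.1.all b) && (m.2.all fun n => !b n)

lemma mEval_merge {α : Type*} [FLew α] (e : ℕ → α) (p q : List ℕ × List ℕ) :
    mEval e (p.1 ++ q.1, p.2 ++ q.2) = mEval e p * mEval e q := by
  simp [mEval, List.prod_append, mul_mul_mul_comm]

section Mons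
variable {α : Type*} [FLew α]

lemma lsup_mul_key (e : ℕ → α) (A B : List (List ℕ × List ℕ)) :
    lsup (A.map (mEval e)) * lsup (B.map (mEval e)) =
    lsup ((A.flatMap fun p => B.map fun q => (p.1 ++ q.1, p.2 ++ q.2)).map (mEval e)) := by
  induction A with
  | nil => simp
  | cons p A ih =>
    rw [List.map_cons, lsup_cons, flew_sup_mul, ih, List.flatMap_cons, List.map_append,
      lsup_append]
    congr 1
    rw [mul_lsup, List.map_map, List.map_map]
    congr 1
    apply List.map_congr_left
    intro q _
    simp [mEval_merge]

lemma eval_eq_lsup_mons (e : ℕ → α) {φ : Term} (hφ : PV φ) :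
    φ.eval e = lsup ((mons φ).map (mEval e)) := by
  induction hφ with
  | var n => simp [Term.eval, mons, mEval]
  | nvar n => simp [Term.eval, mons, mEval, FLew.neg]
  | mul ha hb iha ihb =>
    rw [Term.eval, iha, ihb, lsup_mul_key, mons]
  | sup ha hb iha ihb =>
    rw [Term.eval, iha, ihb, mons, List.map_append, lsup_append]

lemma evalB_iff_mons (b : ℕ → Bool) {φ : Term} (hφ : PV φ) :
    φ.evalB b = true ↔ ∃ m ∈ mons φ, mEvalB b m = true := by
  induction hφ with
  | var n => simp [Term.evalB, mons, mEvalB]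
  | nvar n => simp [Term.evalB, mons, mEvalB]
  | mul ha hb iha ihb =>
    simp only [Term.evalB, Bool.and_eq_true, iha, ihb, mons, List.mem_flatMap, List.mem_map]
    constructor
    · rintro ⟨⟨p, hp, hp1⟩, ⟨q, hq, hq1⟩⟩
      refine ⟨(p.1 ++ q.1, p.2 ++ q.2), ⟨p, hp, q, hq, rfl⟩, ?_⟩
      simp_all [mEvalB, List.all_append]
    · rintro ⟨m, ⟨p, hp, q, hq, rfl⟩, hm⟩
      simp only [mEvalB, List.all_append, Bool.and_eq_true] at hm
      exact ⟨⟨p, hp, by simp [mEvalB, hm.1.1, hm.2.1]⟩,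
             ⟨q, hq, by simp [mEvalB, hm.1.2, hm.2.2]⟩⟩
  | sup ha hb iha ihb =>
    simp only [Term.evalB, Bool.or_eq_true, iha, ihb, mons, List.mem_append]
    constructor
    · rintro (⟨m, hm, h⟩ | ⟨m, hm, h⟩)
      exacts [⟨m, Or.inl hm, h⟩, ⟨m, Or.inr hm, h⟩]
    · rintro ⟨m, (hm | hm), h⟩
      exacts [Or.inl ⟨m, hm, h⟩, Or.inr ⟨m, hm, h⟩]

/-- the canonical {0,1} valuation -/
lemma eval_canonical (b : ℕ → Bool) (φ : Term) :
    φ.eval (fun n => if b n then (1:α) else 0) = if φ.evalB b then 1 else 0 := by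
  induction φ with
  | var n => by_cases h : b n = true <;> simp [Term.eval, Term.evalB, h]
  | zero => simp [Term.eval, Term.evalB]
  | one => simp [Term.eval, Term.evalB]
  | mul a c iha ihc =>
    rw [Term.eval, Term.evalB, iha, ihc]
    cases a.evalB b <;> cases c.evalB b <;> simp
  | arr a c iha ihc =>
    rw [Term.eval, Term.evalB, iha, ihc]
    cases a.evalB b <;> cases c.evalB b <;> simp
  | inf a c iha ihc =>
    rw [Term.eval, Term.evalB, iha, ihc]
    cases a.evalB b <;> cases c.evalB b <;>
      simp [inf_eq_left.2 (flew_zle _), inf_eq_right.2 (flew_zle _)]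
  | sup a c iha ihc =>
    rw [Term.eval, Term.evalB, iha, ihc]
    cases a.evalB b <;> cases c.evalB b <;> simp

end Mons

theorem stmt_18 {α : Type*} [FLew α] (hnt : (0 : α) ≠ 1)
    (φ : Term) (hφ : PV φ) :
    ((∃ e : ℕ → α, φ.eval e ≠ 0) ↔ BoolSat φ) ∧
    ((∃ e : ℕ → α, φ.eval e = 1) ↔ BoolSat φ) := by
  have hB2full : BoolSat φ → ∃ e : ℕ → α, φ.eval e = 1 := by
    rintro ⟨b, hb⟩
    exact ⟨fun n => if b n then (1:α) else 0, by rw [eval_canonical, hb, if_pos rfl]⟩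
  have hpos2B : (∃ e : ℕ → α, φ.eval e ≠ 0) → BoolSat φ := by
    rintro ⟨e, he⟩
    rw [eval_eq_lsup_mons e hφ] at he
    have : ¬ ∀ x ∈ (mons φ).map (mEval e), x = 0 := fun h => he ((lsup_eq_zero_iff _).2 h)
    push_neg at this
    obtain ⟨x, hx, hx0⟩ := this
    obtain ⟨m, hm, rfl⟩ := List.mem_map.1 hx
    -- the monomial m is consistent
    have hdisj : ∀ n, n ∈ m.1 → n ∈ m.2 → False := by
      intro n h1 h2
      apply hx0
      apply flew_le_zero
      calc mEval e m ≤ e n * FLew.neg (e n) :=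
            flew_mul_le_mul (flew_prod_le_of_mem e h1)
              (flew_prod_le_of_mem (fun k => FLew.neg (e k)) h2)
        _ = 0 := flew_mul_neg_self (e n)
    refine ⟨fun n => decide (n ∈ m.1), (evalB_iff_mons _ hφ).2 ⟨m, hm, ?_⟩⟩
    simp only [mEvalB, Bool.and_eq_true, List.all_eq_true]
    refine ⟨fun n hn => by simp [hn], fun n hn => ?_⟩
    simp only [Bool.not_eq_true', decide_eq_false_iff_not]
    exact fun h1 => hdisj n h1 hn
  have hfull2pos : (∃ e : ℕ → α, φ.eval e = 1) → (∃ e : ℕ → α, φ.eval e ≠ 0) := by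
    rintro ⟨e, he⟩
    exact ⟨e, he ▸ fun h => hnt h.symm⟩
  have hB2pos : BoolSat φ → (∃ e : ℕ → α, φ.eval e ≠ 0) := fun h => hfull2pos (hB2full h)
  exact ⟨⟨hpos2B, hB2pos⟩, ⟨fun h => hpos2B (hfull2pos h), hB2full⟩⟩
end
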